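/- Let p(s) = Σ_{k=0}^{m} a_k s^k be a symmetric trapezoidal polynomial with all a_k > 0 whose stable part has length l, and let [n] = 1 + s + ... + s^{n−1} with m ≥ n. Then the product p(s)·[n] is a symmetric trapezoidal polynomial. -/

import Mathlib

open Polynomial

/-- `qpoly n = 1 + s + ⋯ + s^(n-1)`, denoted `[n]` in the paper. -/
noncomputable def qpoly (n : ℕ) : Polynomial ℝ :=
  ∑ i ∈ Finset.range n, Polynomial.X ^ i

/-- All coefficients of `p` over its support `0, …, natDegree p` are positive. -/
def PosCoeffs (p : Polynomial ℝ) : Prop :=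
  ∀ k ≤ p.natDegree, 0 < p.coeff k

/-- `p` is symmetric: its coefficient sequence over its support reads the same
forwards and backwards. -/
def SymmetricPoly (p : Polynomial ℝ) : Prop :=
  ∀ k ≤ p.natDegree, p.coeff k = p.coeff (p.natDegree - k)

/-- `p` is trapezoidal: its coefficients strictly increase, then are constant,
then strictly decrease. -/
def Trapezoidal (p : Polynomial ℝ) : Prop :=
  ∃ i j : ℕ, i ≤ j ∧ j ≤ p.natDegree ∧
    (∀ k, k < i → p.coeff k < p.coeff (k + 1)) ∧
    (∀ k, i ≤ k → k < j → p.coeff k = p.coeff (k + 1)) ∧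
    (∀ k, j ≤ k → k < p.natDegree → p.coeff (k + 1) < p.coeff k)

/-- `p` has a run of `l + 1` equal consecutive coefficients within its support. -/
def HasRun (p : Polynomial ℝ) (l : ℕ) : Prop :=
  ∃ k0 : ℕ, k0 + l ≤ p.natDegree ∧ ∀ i ≤ l, p.coeff (k0 + i) = p.coeff k0

/-- The stable part of `p` has length `l`: `l` is the largest integer such that
some `l + 1` consecutive coefficients of `p` are all equal. -/
def StableLength (p : Polynomial ℝ) (l : ℕ) : Prop :=
  HasRun p l ∧ ∀ l', HasRun p l' → l' ≤ l

/-! Write `a` for the coefficients of `p`, padded by zeros on `ℤ`, and `m = deg p`. Since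
`[n] * (X - 1) = X ^ n - 1`, the differences of `c = p * [n]` are
`c (k + 1) - c k = a (k + 1) - a (k + 1 - n)`. Symmetry and trapezoidality with `a 0 > 0` force the
plateau of `p` to be `[i, m - i]`, so `a` factors through the integer profile
`t ↦ max (-1) (min i (min t (m - t)))` followed by a function strictly increasing on `[-1, i]`.
The sign of each difference is thus an integer comparison: positive for
`k < min (i + n - 1) (min m ((m + n - 1) / 2))`, zero from there to the middle of `c`.
As `c` is symmetric (reversal is multiplicative), this determines the second half too. -/

lemma coeff_qpoly (n k : ℕ) : (qpoly n).coeff k = if k < n then 1 else 0 := by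
  simp [qpoly, coeff_X_pow]

lemma natDegree_qpoly (n : ℕ) : (qpoly n).natDegree = n - 1 := by
  rcases Nat.eq_zero_or_pos n with rfl | hn
  · simp [qpoly]
  refine le_antisymm (natDegree_le_iff_coeff_eq_zero.mpr fun k hk => ?_)
    (le_natDegree_of_ne_zero ?_)
  · rw [coeff_qpoly, if_neg (by omega)]
  · rw [coeff_qpoly, if_pos (by omega)]
    exact one_ne_zero

lemma natDegree_mul_qpoly {p : ℝ[X]} (hp : p ≠ 0) {n : ℕ} (hn : 1 ≤ n) :
    (p * qpoly n).natDegree = p.natDegree + n - 1 := by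
  have hq : qpoly n ≠ 0 := fun h => by
    have := coeff_qpoly n 0
    simp [h] at this
    omega
  rw [natDegree_mul hp hq, natDegree_qpoly]
  omega

lemma qpoly_mul_X_sub_one (n : ℕ) : qpoly n * (X - 1) = X ^ n - 1 :=
  geom_sum_mul X n

lemma symmetricPoly_iff_reverse_eq {p : ℝ[X]} : SymmetricPoly p ↔ p.reverse = p := by
  constructor
  · intro h
    ext k
    rw [coeff_reverse]
    rcases le_or_gt k p.natDegree with hk | hk
    · rw [revAt_le hk, ← h k hk]
    · rw [revAt_eq_self_of_lt hk]
  · intro h k hk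
    rw [← h, coeff_reverse, revAt_le hk, h]

lemma SymmetricPoly.mul {p q : ℝ[X]} (hp : SymmetricPoly p) (hq : SymmetricPoly q) :
    SymmetricPoly (p * q) := by
  rw [symmetricPoly_iff_reverse_eq] at *
  rw [reverse_mul_of_domain, hp, hq]

lemma symmetricPoly_qpoly (n : ℕ) : SymmetricPoly (qpoly n) := by
  intro k hk
  rw [natDegree_qpoly] at hk ⊢
  simp only [coeff_qpoly]
  congr 1
  exact propext (by omega)

lemma trapezoidal_of_symmetricPoly {c : ℝ[X]} (hc : SymmetricPoly c) {I : ℕ}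
    (hI : 2 * I ≤ c.natDegree) (hinc : ∀ k < I, c.coeff k < c.coeff (k + 1))
    (hflat : ∀ k, I ≤ k → 2 * k < c.natDegree → c.coeff k = c.coeff (k + 1)) :
    Trapezoidal c := by
  set N := c.natDegree
  have hmirror : ∀ k < N,
      c.coeff k = c.coeff (N - k - 1 + 1) ∧ c.coeff (k + 1) = c.coeff (N - k - 1) := fun k hk =>
    ⟨(hc k hk.le).trans (congrArg c.coeff (by omega)),
      (hc (k + 1) hk).trans (congrArg c.coeff (by omega))⟩
  refine ⟨I, N - I, by omega, by omega, hinc, fun k hIk hk => ?_, fun k hk hkN => ?_⟩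
  · rcases lt_or_ge (2 * k) N with hhalf | hhalf
    · exact hflat k hIk hhalf
    · obtain ⟨h1, h2⟩ := hmirror k (by omega)
      rw [h1, h2, hflat (N - k - 1) (by omega) (by omega)]
  · obtain ⟨h1, h2⟩ := hmirror k hkN
    rw [h1, h2]
    exact hinc (N - k - 1) (by omega)

lemma eqOn_Icc_of_eq_succ {α : Type*} (f : ℕ → α) {i j : ℕ}
    (h : ∀ k, i ≤ k → k < j → f k = f (k + 1)) : ∀ k ∈ Set.Icc i j, f k = f i := by
  rintro k ⟨hik, hkj⟩
  induction k, hik using Nat.le_induction with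
  | base => rfl
  | succ k hik ih => rw [← h k hik (by omega), ih (by omega)]

lemma SymmetricPoly.exists_strictMonoOn_and_plateau {p : ℝ[X]} (hsym : SymmetricPoly p)
    (htrap : Trapezoidal p) :
    ∃ i, 2 * i ≤ p.natDegree ∧ StrictMonoOn p.coeff (Set.Iic i) ∧
      ∀ k ∈ Set.Icc i (p.natDegree - i), p.coeff k = p.coeff i := by
  obtain ⟨i, j, hij, hjm, hinc, hflat, hdec⟩ := htrap
  set m := p.natDegree
  have hmono : StrictMonoOn p.coeff (Set.Iic i) := strictMonoOn_Iic_of_lt_succ hinc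
  have hanti : StrictAntiOn p.coeff (Set.Icc j m) :=
    strictAntiOn_of_succ_lt Set.ordConnected_Icc fun k _ hk hk' => hdec k hk.1 hk'.2
  have hplateau := eqOn_Icc_of_eq_succ p.coeff hflat
  have hji : p.coeff j = p.coeff i := hplateau j ⟨hij, le_rfl⟩
  have hsum : i + j = m := by
    rcases lt_trichotomy (i + j) m with h | h | h
    · have := hanti ⟨le_rfl, hjm⟩ ⟨by omega, by omega⟩ (show j < m - i by omega)
      rw [← hsym i (by omega)] at this
      exact absurd hji this.ne'
    · exact h
    · have := hmono (Set.mem_Iic.mpr (by omega)) Set.self_mem_Iic (show m - j < i by omega)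
      rw [← hsym j hjm] at this
      exact absurd hji this.ne
  refine ⟨i, by omega, hmono, fun k hk => hplateau k ?_⟩
  rwa [← hsum, Nat.add_sub_cancel_left] at hk

noncomputable def intCoeff (p : ℝ[X]) (t : ℤ) : ℝ :=
  if 0 ≤ t then p.coeff t.toNat else 0

@[simp]
lemma intCoeff_natCast (p : ℝ[X]) (k : ℕ) : intCoeff p k = p.coeff k := by
  simp [intCoeff]

lemma intCoeff_of_neg (p : ℝ[X]) {t : ℤ} (ht : t < 0) : intCoeff p t = 0 :=
  if_neg ht.not_ge

lemma intCoeff_natCast_sub (p : ℝ[X]) (a b : ℕ) :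
    intCoeff p ((a : ℤ) - b) = if b ≤ a then p.coeff (a - b) else 0 := by
  unfold intCoeff
  split_ifs <;> first | rfl | omega | (congr 1; omega)

lemma SymmetricPoly.intCoeff_natDegree_sub {p : ℝ[X]} (hsym : SymmetricPoly p) (t : ℤ) :
    intCoeff p (p.natDegree - t) = intCoeff p t := by
  set m := p.natDegree
  rcases lt_or_ge t 0 with ht | ht
  · rw [intCoeff_of_neg p ht, intCoeff, if_pos (by omega)]
    exact coeff_eq_zero_of_natDegree_lt (by omega)
  lift t to ℕ using ht
  rcases le_or_gt t m with htm | htm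
  · rw [← Nat.cast_sub htm, intCoeff_natCast, intCoeff_natCast, ← hsym t htm]
  · rw [intCoeff_of_neg p (by omega), intCoeff_natCast, coeff_eq_zero_of_natDegree_lt htm]

lemma coeff_mul_qpoly_succ_sub_coeff (p : ℝ[X]) (n k : ℕ) :
    (p * qpoly n).coeff (k + 1) - (p * qpoly n).coeff k =
      intCoeff p (k + 1 : ℕ) - intCoeff p ((k + 1 : ℕ) - n) := by
  have h := congrArg (coeff · (k + 1)) (congrArg (p * ·) (qpoly_mul_X_sub_one n))
  simp only [← mul_assoc, mul_sub, mul_one, coeff_sub, coeff_mul_X, coeff_mul_X_pow'] at h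
  rw [intCoeff_natCast, intCoeff_natCast_sub]
  linarith

def tent (i m : ℕ) (t : ℤ) : ℤ :=
  max (-1) (min (i : ℤ) (min t (m - t)))

lemma tent_mem_Icc (i m : ℕ) (t : ℤ) : tent i m t ∈ Set.Icc (-1) (i : ℤ) := by
  unfold tent
  constructor <;> omega

lemma tent_sub_lt_tent {i m n k : ℕ} (hn : 1 ≤ n)
    (hk : k < min (i + n - 1) (min m ((m + n - 1) / 2))) :
    tent i m ((k + 1 : ℕ) - n) < tent i m (k + 1 : ℕ) := by
  unfold tent
  omega

lemma tent_sub_eq_tent {i m n k : ℕ}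
    (hk : min (i + n - 1) (min m ((m + n - 1) / 2)) ≤ k) (hk' : 2 * k < m + n - 1) :
    tent i m ((k + 1 : ℕ) - n) = tent i m (k + 1 : ℕ) := by
  unfold tent
  omega

lemma exists_intCoeff_eq_intCoeff_tent {p : ℝ[X]} (h0 : 0 < p.coeff 0) (hsym : SymmetricPoly p)
    (htrap : Trapezoidal p) :
    ∃ i : ℕ, StrictMonoOn (intCoeff p) (Set.Icc (-1) i) ∧
      ∀ t, intCoeff p t = intCoeff p (tent i p.natDegree t) := by
  obtain ⟨i, hi, hmono, hplateau⟩ := hsym.exists_strictMonoOn_and_plateau htrap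
  set m := p.natDegree
  refine ⟨i, ?_, fun t => ?_⟩
  · rintro u ⟨hu1, hu2⟩ v ⟨hv1, hv2⟩ huv
    lift v to ℕ using (by omega)
    rcases (show u = -1 ∨ 0 ≤ u by omega) with rfl | hu
    · rw [intCoeff_natCast, intCoeff_of_neg p (by norm_num)]
      exact h0.trans_le (hmono.monotoneOn (Set.mem_Iic.mpr (Nat.zero_le i))
        (Set.mem_Iic.mpr (by omega)) (Nat.zero_le v))
    · lift u to ℕ using hu
      rw [intCoeff_natCast, intCoeff_natCast]
      exact hmono (Set.mem_Iic.mpr (by omega)) (Set.mem_Iic.mpr (by omega)) (by omega)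
  have hhalf : ∀ t : ℤ, 2 * t ≤ m → intCoeff p t = intCoeff p (tent i m t) := by
    intro t ht
    rcases lt_or_ge t 0 with hneg | hnonneg
    · rw [intCoeff_of_neg p hneg, intCoeff_of_neg p (by unfold tent; omega)]
    lift t to ℕ using hnonneg
    rcases le_or_gt t i with hti | hti
    · congr 1
      unfold tent
      omega
    · rw [show tent i m t = i by unfold tent; omega, intCoeff_natCast, intCoeff_natCast]
      exact hplateau t ⟨hti.le, by omega⟩
  rcases le_or_gt (2 * t) m with ht | ht
  · exact hhalf t ht
  · rw [← hsym.intCoeff_natDegree_sub, hhalf _ (by omega)]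
    congr 1
    unfold tent
    omega

theorem symmetric_trapezoidal_mul_qpoly_general (p : Polynomial ℝ) (n : ℕ) (hn : 1 ≤ n)
    (hpos : PosCoeffs p) (hsym : SymmetricPoly p) (htrap : Trapezoidal p) :
    SymmetricPoly (p * qpoly n) ∧ Trapezoidal (p * qpoly n) := by
  have h0 : 0 < p.coeff 0 := hpos 0 (Nat.zero_le _)
  have hdeg := natDegree_mul_qpoly (p := p) (by rintro rfl; simp at h0) hn
  obtain ⟨i, hmono, hfactor⟩ := exists_intCoeff_eq_intCoeff_tent h0 hsym htrap
  set m := p.natDegree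
  have hsymm := hsym.mul (symmetricPoly_qpoly n)
  refine ⟨hsymm, trapezoidal_of_symmetricPoly hsymm
    (I := min (i + n - 1) (min m ((m + n - 1) / 2))) (by omega) (fun k hk => ?_)
    (fun k hk hk' => ?_)⟩
  · rw [← sub_pos, coeff_mul_qpoly_succ_sub_coeff, sub_pos, hfactor (k + 1 : ℕ),
      hfactor ((k + 1 : ℕ) - n)]
    exact hmono (tent_mem_Icc ..) (tent_mem_Icc ..) (tent_sub_lt_tent hn hk)
  · refine (sub_eq_zero.mp ?_).symm
    rw [coeff_mul_qpoly_succ_sub_coeff, hfactor (k + 1 : ℕ), hfactor ((k + 1 : ℕ) - n),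
      tent_sub_eq_tent hk (by omega), sub_self]

theorem symmetric_trapezoidal_mul_qpoly (p : Polynomial ℝ) (m n l : ℕ)
    (hdeg : p.natDegree = m) (hn : 1 ≤ n) (hmn : n ≤ m)
    (hpos : PosCoeffs p) (hsym : SymmetricPoly p) (htrap : Trapezoidal p)
    (hlen : StableLength p l) :
    SymmetricPoly (p * qpoly n) ∧ Trapezoidal (p * qpoly n) :=
  symmetric_trapezoidal_mul_qpoly_general p n hn hpos hsym htrap
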